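/- arXiv:2101.05008 — 5 statements merged into one kernel-verified Lean document; each statement's English description precedes it below -/
import Mathlib

section
/- Let F(x) = exp(−d(1 − x^{r−1})) for d > 0 and integer r ≥ 3, and consider the fixed-point equation 1 − ρ = F(1 − ρ) on ρ ∈ [0,1). If d < 1/(r−1), then ρ = 0 is the only solution in [0,1). -/
/-!
Put `x = 1 - ρ`, so that the equation reads `log x = -d (1 - x ^ (r - 1))`. For `0 ≤ x < 1`
Bernoulli's inequality gives `d (1 - x ^ (r - 1)) ≤ d (r - 1) (1 - x) < 1 - x` once
`d (r - 1) < 1`, whereas `log x ≤ x - 1`; so the only solution is `x = 1`.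
-/

open Real

section Bernoulli

variable {α : Type*} [CommRing α] [LinearOrder α] [IsStrictOrderedRing α]

lemma one_sub_pow_le_mul_one_sub {x : α} (hx : -1 ≤ x) (n : ℕ) :
    1 - x ^ n ≤ n * (1 - x) := by
  have := one_add_mul_le_pow (a := x - 1) (by linarith) n
  rw [add_sub_cancel] at this
  linarith

lemma mul_one_sub_pow_lt_one_sub {d x : α} {n : ℕ} (hx0 : 0 ≤ x) (hx1 : x < 1)
    (hdn : d * n < 1) : d * (1 - x ^ n) < 1 - x := by
  have hx : 0 < 1 - x := sub_pos.mpr hx1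
  rcases le_total d 0 with hd | hd
  · have : 0 ≤ 1 - x ^ n := sub_nonneg.mpr (pow_le_one₀ hx0 hx1.le)
    linarith [mul_nonpos_of_nonpos_of_nonneg hd this]
  · calc d * (1 - x ^ n) ≤ d * (n * (1 - x)) :=
          mul_le_mul_of_nonneg_left (one_sub_pow_le_mul_one_sub (by linarith) n) hd
      _ = d * n * (1 - x) := by ring
      _ < 1 * (1 - x) := mul_lt_mul_of_pos_right hdn hx
      _ = 1 - x := one_mul _

end Bernoulli

lemma eq_one_of_eq_exp_neg_mul_one_sub_pow {d x : ℝ} {n : ℕ} (hx0 : 0 < x) (hx1 : x ≤ 1)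
    (hdn : d * n < 1) (hfix : x = exp (-(d * (1 - x ^ n)))) : x = 1 := by
  by_contra hne
  have hlog : log x = -(d * (1 - x ^ n)) := by
    have := congrArg log hfix
    rwa [log_exp] at this
  linarith [log_le_sub_one_of_pos hx0,
    mul_one_sub_pow_lt_one_sub hx0.le (lt_of_le_of_ne hx1 hne) hdn]

lemma mul_natCast_sub_one_lt_one {d : ℝ} {r : ℕ} (hd : d < 1 / ((r : ℝ) - 1)) :
    d * ((r - 1 : ℕ) : ℝ) < 1 := by
  rcases le_or_gt r 1 with hr | hr
  · simp [Nat.sub_eq_zero_of_le hr]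
  · have hr' : (1 : ℝ) < r := by exact_mod_cast hr
    rw [Nat.cast_sub hr.le, Nat.cast_one]
    exact (lt_div_iff₀ (sub_pos.mpr hr')).mp hd

theorem subcritical_fixed_point_general (r : ℕ) (d : ℝ)
    (hd : d < 1 / ((r : ℝ) - 1)) (ρ : ℝ) (h0 : 0 ≤ ρ) (h1 : ρ < 1)
    (hfix : 1 - ρ = Real.exp (-(d * (1 - (1 - ρ) ^ (r - 1))))) :
    ρ = 0 := by
  have hx : 1 - ρ = 1 := eq_one_of_eq_exp_neg_mul_one_sub_pow (by linarith) (by linarith)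
    (mul_natCast_sub_one_lt_one hd) hfix
  linarith

/-- If `d < 1/(r-1)`, then `ρ = 0` is the only solution in `[0,1)` of the fixed-point
equation `1 - ρ = F(1 - ρ)` where `F(x) = exp(-d(1 - x^(r-1)))`. -/
theorem subcritical_fixed_point (r : ℕ) (hr : 3 ≤ r) (d : ℝ) (hd0 : 0 < d)
    (hd : d < 1 / ((r : ℝ) - 1)) (ρ : ℝ) (h0 : 0 ≤ ρ) (h1 : ρ < 1)
    (hfix : 1 - ρ = Real.exp (-(d * (1 - (1 - ρ) ^ (r - 1))))) :
    ρ = 0 :=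
  subcritical_fixed_point_general r d hd ρ h0 h1 hfix
end

section
/- Let F(x) = exp(−d(1 − x^{r−1})) for d > 0 and integer r ≥ 3. If d > 1/(r−1), then the fixed-point equation 1 − ρ = F(1 − ρ) has exactly one solution ρ in the open interval (0,1) (in addition to the trivial solution ρ = 0). -/
/-!
With `n = r - 1` and `x = 1 - ρ`, the equation reads `f x = 0` for
`f x = log x + d (1 - x ^ n)`. This `f` is strictly concave on `(0, ∞)` (log is strictly
concave, `x ^ n` convex), vanishes at `1`, tends to `-∞` at `0⁺`, and `f' 1 = 1 - d n < 0`.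
So `f` is positive just left of `1` and has a zero in `(0, 1)` by the intermediate value
theorem; a second one would give three zeros of a strictly concave function.
-/

open Real Set Filter Topology

theorem StrictConcaveOn.pos_of_eq_zero_of_eq_zero {s : Set ℝ} {f : ℝ → ℝ}
    (hf : StrictConcaveOn ℝ s f) {x y z : ℝ} (hx : x ∈ s) (hz : z ∈ s) (hxy : x < y)
    (hyz : y < z) (hfx : f x = 0) (hfz : f z = 0) : 0 < f y := by
  have hy : y ∈ openSegment ℝ x z := by
    rw [openSegment_eq_Ioo (hxy.trans hyz)]
    exact ⟨hxy, hyz⟩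
  simpa [hfx, hfz] using hf.lt_on_openSegment hx hz (hxy.trans hyz).ne hy

theorem HasDerivAt.eventually_nhdsLT_lt_of_neg {f : ℝ → ℝ} {f' b : ℝ} (hf : HasDerivAt f f' b)
    (hf' : f' < 0) : ∀ᶠ y in 𝓝[<] b, f b < f y := by
  have hslope : ∀ᶠ y in 𝓝[<] b, slope f b y < 0 :=
    (hasDerivAt_iff_tendsto_slope_left_right.1 hf).1.eventually (gt_mem_nhds hf')
  filter_upwards [hslope, self_mem_nhdsWithin] with y hy hyb
  rw [slope_def_field, div_lt_iff_of_neg (sub_neg.2 hyb), zero_mul] at hy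
  linarith

theorem exists_mem_Ioo_eq_zero_of_tendsto_atBot_of_hasDerivAt_neg {f : ℝ → ℝ} {f' a b : ℝ}
    (hab : a < b) (hcont : ContinuousOn f (Ioo a b)) (hf_a : Tendsto f (𝓝[>] a) atBot)
    (hf_b : HasDerivAt f f' b) (hf' : f' < 0) (hfb : f b = 0) :
    ∃ x ∈ Ioo a b, f x = 0 := by
  obtain ⟨y, hfy, hy⟩ :=
    ((hf_b.eventually_nhdsLT_lt_of_neg hf').and (Ioo_mem_nhdsLT hab)).exists
  obtain ⟨x, hfx, hx⟩ :=
    ((hf_a.eventually (eventually_lt_atBot 0)).and (Ioo_mem_nhdsGT hy.1)).exists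
  obtain ⟨z, hz, hfz⟩ := intermediate_value_Ioo hx.2.le
    (hcont.mono (Icc_subset_Ioo hx.1 hy.2)) ⟨hfx, hfb ▸ hfy⟩
  exact ⟨z, ⟨hx.1.trans hz.1, hz.2.trans hy.2⟩, hfz⟩

noncomputable def fixedPointDefect (d : ℝ) (n : ℕ) (x : ℝ) : ℝ := log x + d * (1 - x ^ n)

section fixedPointDefect

variable {d : ℝ} {n : ℕ}

theorem fixedPointDefect_one : fixedPointDefect d n 1 = 0 := by
  simp [fixedPointDefect]

theorem eq_exp_iff_fixedPointDefect_eq_zero {x : ℝ} (hx : 0 < x) :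
    x = exp (-(d * (1 - x ^ n))) ↔ fixedPointDefect d n x = 0 := by
  nth_rewrite 1 [← exp_log hx]
  rw [exp_eq_exp, fixedPointDefect, eq_neg_iff_add_eq_zero]

theorem strictConcaveOn_fixedPointDefect (hd : 0 ≤ d) :
    StrictConcaveOn ℝ (Ioi 0) (fixedPointDefect d n) := by
  have hpow : ConvexOn ℝ (Ioi 0) fun x : ℝ => d • x ^ n :=
    ((convexOn_pow n).subset Ioi_subset_Ici_self (convex_Ioi 0)).smul hd
  refine (strictConcaveOn_log_Ioi.add_concaveOn (hpow.neg.add_const d)).congr fun x _ => ?_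
  simp only [fixedPointDefect, Pi.add_apply, Pi.neg_apply, smul_eq_mul]
  ring

theorem hasDerivAt_fixedPointDefect {x : ℝ} (hx : 0 < x) :
    HasDerivAt (fixedPointDefect d n) (x⁻¹ - d * (n * x ^ (n - 1))) x :=
  ((hasDerivAt_log hx.ne').add (((hasDerivAt_pow n x).const_sub 1).const_mul d)).congr_deriv
    (by ring)

theorem continuousOn_fixedPointDefect : ContinuousOn (fixedPointDefect d n) (Ioi 0) :=
  fun _ hx => (hasDerivAt_fixedPointDefect hx).continuousAt.continuousWithinAt

theorem tendsto_fixedPointDefect_nhdsGT_zero :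
    Tendsto (fixedPointDefect d n) (𝓝[>] 0) atBot :=
  tendsto_log_nhdsGT_zero.atBot_add
    ((by fun_prop : Continuous fun x : ℝ => d * (1 - x ^ n)).tendsto 0 |>.mono_left
      nhdsWithin_le_nhds)

theorem existsUnique_fixedPointDefect_eq_zero (hdn : 1 < d * n) :
    ∃! x, x ∈ Ioo (0 : ℝ) 1 ∧ fixedPointDefect d n x = 0 := by
  obtain ⟨x, hx, hfx⟩ := exists_mem_Ioo_eq_zero_of_tendsto_atBot_of_hasDerivAt_neg one_pos
    (continuousOn_fixedPointDefect.mono Ioo_subset_Ioi_self) tendsto_fixedPointDefect_nhdsGT_zero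
    (hasDerivAt_fixedPointDefect one_pos) (by simpa using hdn) fixedPointDefect_one
  refine ⟨x, ⟨hx, hfx⟩, fun y ⟨hy, hfy⟩ => ?_⟩
  have hconc : StrictConcaveOn ℝ (Ioi 0) (fixedPointDefect d n) :=
    strictConcaveOn_fixedPointDefect (pos_of_mul_pos_left (one_pos.trans hdn) n.cast_nonneg).le
  have h1 : (1 : ℝ) ∈ Ioi 0 := mem_Ioi.2 one_pos
  by_contra hne
  rcases lt_or_gt_of_ne hne with h | h
  · exact (hconc.pos_of_eq_zero_of_eq_zero hy.1 h1 h hx.2 hfy fixedPointDefect_one).ne' hfx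
  · exact (hconc.pos_of_eq_zero_of_eq_zero hx.1 h1 h hy.2 hfx fixedPointDefect_one).ne' hfy

end fixedPointDefect

theorem supercritical_fixed_point_general (r : ℕ) (hr : 3 ≤ r) (d : ℝ)
    (hd : 1 / ((r : ℝ) - 1) < d) :
    ∃! ρ : ℝ, ρ ∈ Set.Ioo (0 : ℝ) 1 ∧
      1 - ρ = Real.exp (-(d * (1 - (1 - ρ) ^ (r - 1)))) := by
  have hcast : ((r - 1 : ℕ) : ℝ) = r - 1 := by
    rw [Nat.cast_sub (by omega), Nat.cast_one]
  have hr' : (0 : ℝ) < r - 1 := by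
    rw [← hcast]
    exact_mod_cast (by omega : 0 < r - 1)
  have hdn : 1 < d * (r - 1 : ℕ) := by
    rw [hcast]
    exact (div_lt_iff₀ hr').1 hd
  obtain ⟨x, ⟨hx, hfx⟩, huniq⟩ := existsUnique_fixedPointDefect_eq_zero hdn
  refine ⟨1 - x, ⟨⟨by linarith [hx.2], by linarith [hx.1]⟩, ?_⟩, fun ρ ⟨hρ, hρeq⟩ => ?_⟩
  · rwa [sub_sub_cancel, eq_exp_iff_fixedPointDefect_eq_zero hx.1]
  · have h1ρ : 0 < 1 - ρ := by linarith [hρ.2]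
    have := huniq (1 - ρ)
      ⟨⟨h1ρ, by linarith [hρ.1]⟩, (eq_exp_iff_fixedPointDefect_eq_zero h1ρ).1 hρeq⟩
    linarith

/-- If `d > 1/(r-1)`, then the fixed-point equation `1 - ρ = F(1 - ρ)` with
`F(x) = exp(-d(1 - x^(r-1)))` has exactly one solution `ρ` in the open interval `(0,1)`. -/
theorem supercritical_fixed_point (r : ℕ) (hr : 3 ≤ r) (d : ℝ) (hd0 : 0 < d)
    (hd : 1 / ((r : ℝ) - 1) < d) :
    ∃! ρ : ℝ, ρ ∈ Set.Ioo (0 : ℝ) 1 ∧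
      1 - ρ = Real.exp (-(d * (1 - (1 - ρ) ^ (r - 1)))) :=
  supercritical_fixed_point_general r hr d hd
end

section
/- Let G be a bipartite factor graph with variable nodes V and factor nodes F, where every factor node has degree r. Define the peeling process: G₀ = G, and G_{i+1} is obtained from G_i by deleting all edges incident to nodes of degree exactly 1 in G_i. Then for every i ≥ 2, the number of variable nodes first disabled in round i is at most the number of factor nodes first disabled in round i−1, and the number of factor nodes first disabled in round i is at most the number of variable nodes first disabled in round i−1. (A node is disabled in round i if it has degree 1 in G_{i−1}.) -/
variable {V F : Type*} [DecidableEq V] [DecidableEq F] [Fintype V] [Fintype F]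

/-- degree of a variable node `v` in the factor graph with edge set `E` -/
def degV (E : Finset (V × F)) (v : V) : ℕ := (E.filter (fun p => p.1 = v)).card

/-- degree of a factor node `a` in the factor graph with edge set `E` -/
def degF (E : Finset (V × F)) (a : F) : ℕ := (E.filter (fun p => p.2 = a)).card

/-- one round of the peeling process: delete all edges incident to degree-1 nodes -/
def peel (E : Finset (V × F)) : Finset (V × F) :=
  E.filter (fun p => degV E p.1 ≠ 1 ∧ degF E p.2 ≠ 1)

/-! A variable node `v` of degree 1 after a round still has an edge, so it did not have degree 1
before the round, and it lost an edge; that edge was deleted because its factor node `b` had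
degree 1. As `b` has a single edge, distinct such `v` give distinct `b`. The factor side is the
same statement for the transposed graph. -/

section

omit [Fintype V] [Fintype F]

lemma degV_peel_le (E : Finset (V × F)) (v : V) : degV (peel E) v ≤ degV E v :=
  Finset.card_le_card (Finset.filter_subset_filter _ (Finset.filter_subset _ _))

omit [DecidableEq V] in
lemma eq_of_degF_eq_one {E : Finset (V × F)} {b : F} (hb : degF E b = 1) {v w : V}
    (hv : (v, b) ∈ E) (hw : (w, b) ∈ E) : v = w := by
  simpa using Finset.card_le_one.mp hb.le (v, b) (by simp [hv]) (w, b) (by simp [hw])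

lemma exists_degF_eq_one_of_degV_peel_eq_one {E : Finset (V × F)} {v : V}
    (hv : degV (peel E) v = 1) : ∃ b : F, (v, b) ∈ E ∧ degF E b = 1 := by
  have hvE : degV E v ≠ 1 := by
    obtain ⟨p, hp⟩ := Finset.card_eq_one.mp hv
    have hpv : p ∈ (peel E).filter (·.1 = v) := by simp [hp]
    simp only [Finset.mem_filter, peel] at hpv
    exact hpv.2 ▸ hpv.1.2.1
  have hlt : degV (peel E) v < degV E v := by
    have := degV_peel_le E v
    omega
  obtain ⟨⟨w, b⟩, hwb, hpeel⟩ := Finset.exists_mem_notMem_of_card_lt_card hlt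
  obtain ⟨hwbE, rfl⟩ : (w, b) ∈ E ∧ w = v := Finset.mem_filter.mp hwb
  refine ⟨b, hwbE, ?_⟩
  by_contra hb
  exact hpeel (Finset.mem_filter.mpr ⟨Finset.mem_filter.mpr ⟨hwbE, hvE, hb⟩, rfl⟩)

lemma degV_image_swap (E : Finset (V × F)) (a : F) : degV (E.image Prod.swap) a = degF E a := by
  rw [degV, Finset.filter_image, Finset.card_image_of_injective _ Prod.swap_injective]
  rfl

lemma degF_image_swap (E : Finset (V × F)) (v : V) : degF (E.image Prod.swap) v = degV E v := by
  rw [degF, Finset.filter_image, Finset.card_image_of_injective _ Prod.swap_injective]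
  rfl

lemma peel_image_swap (E : Finset (V × F)) :
    peel (E.image Prod.swap) = (peel E).image Prod.swap := by
  simp only [peel, Finset.filter_image, Prod.fst_swap, Prod.snd_swap, degV_image_swap,
    degF_image_swap, and_comm]

end

lemma card_degV_peel_eq_one_le (E : Finset (V × F)) :
    (Finset.univ.filter (fun v : V => degV (peel E) v = 1)).card
      ≤ (Finset.univ.filter (fun a : F => degF E a = 1)).card :=
  Finset.card_le_card_of_forall_subsingleton (fun v b => (v, b) ∈ E)
    (fun _ hv => by
      simpa only [and_comm, Finset.mem_filter, Finset.mem_univ, true_and] using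
        exists_degF_eq_one_of_degV_peel_eq_one (Finset.mem_filter.mp hv).2)
    (fun _ hb _ hv _ hw => eq_of_degF_eq_one (Finset.mem_filter.mp hb).2 hv.2 hw.2)

lemma card_degF_peel_eq_one_le (E : Finset (V × F)) :
    (Finset.univ.filter (fun a : F => degF (peel E) a = 1)).card
      ≤ (Finset.univ.filter (fun v : V => degV E v = 1)).card := by
  simpa only [peel_image_swap, degV_image_swap, degF_image_swap] using
    card_degV_peel_eq_one_le (E.image Prod.swap)

theorem peeling_disabled_bound_general (E0 : Finset (V × F)) (i : ℕ) (hi : 2 ≤ i) :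
    (Finset.univ.filter (fun v : V => degV (peel^[i - 1] E0) v = 1)).card
      ≤ (Finset.univ.filter (fun a : F => degF (peel^[i - 2] E0) a = 1)).card ∧
    (Finset.univ.filter (fun a : F => degF (peel^[i - 1] E0) a = 1)).card
      ≤ (Finset.univ.filter (fun v : V => degV (peel^[i - 2] E0) v = 1)).card := by
  obtain ⟨k, rfl⟩ : ∃ k, i = k + 2 := ⟨i - 2, by omega⟩
  rw [show k + 2 - 1 = k + 1 by omega, show k + 2 - 2 = k by omega,
    Function.iterate_succ_apply']
  exact ⟨card_degV_peel_eq_one_le _, card_degF_peel_eq_one_le _⟩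

/-- In the peeling process on a bipartite factor graph in which every factor node has
degree `r`, for every `i ≥ 2` the number of variable nodes disabled in round `i` (i.e.\ of
degree 1 in `G_{i-1}`) is at most the number of factor nodes disabled in round `i-1`, and
vice versa. -/
theorem peeling_disabled_bound (r : ℕ) (hr : 3 ≤ r) (E0 : Finset (V × F))
    (hreg : ∀ a : F, degF E0 a = r) (i : ℕ) (hi : 2 ≤ i) :
    (Finset.univ.filter (fun v : V => degV (peel^[i - 1] E0) v = 1)).card
      ≤ (Finset.univ.filter (fun a : F => degF (peel^[i - 2] E0) a = 1)).card ∧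
    (Finset.univ.filter (fun a : F => degF (peel^[i - 1] E0) a = 1)).card
      ≤ (Finset.univ.filter (fun v : V => degV (peel^[i - 2] E0) v = 1)).card :=
  peeling_disabled_bound_general E0 i hi
end

section
/- Let T be a rooted tree of depth at most ℓ+1 rooted at w. Run the following deletion process: for i = 1,…,ℓ, delete every node at depth ℓ+1−i that has no surviving child at depth ℓ+2−i (nodes at depth ℓ+1 always survive). If the number of surviving children of the root w is j ≥ 2, then after ℓ rounds of the peeling process (deleting edges at degree-1 nodes) applied to T, the root w still has degree at least j. -/
/-!
Every edge `{x, T x}` whose lower endpoint `x` has a descendant at depth `ℓ + 1` and lies at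
depth at most `ℓ + 1 - i` survives `i` rounds of peeling: by induction on `i`, its lower
endpoint keeps the edge to a surviving child, its upper endpoint keeps the edge to its own
parent, and when the upper endpoint is the root `w` it keeps the edge to another surviving
child of `w`, which exists because `j ≥ 2`. With `i = ℓ` this applies to the `j` edges from
`w` to its surviving children.
-/

variable {V : Type*} [DecidableEq V] [Fintype V]

/-- degree of `v` in the graph with edge set `E` (edges are 2-element vertex sets) -/
def gdeg (E : Finset (Finset V)) (v : V) : ℕ := (E.filter (fun e => v ∈ e)).card

/-- one round of the peeling process: delete all edges incident to degree-1 nodes -/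
def gpeel (E : Finset (Finset V)) : Finset (Finset V) :=
  E.filter (fun e => ∀ v ∈ e, gdeg E v ≠ 1)

/-- A node `v` of the tree with parent map `T` and depth function `dep` survives the
bottom-up deletion process `CoreConstruct` (with parameter `ℓ`) iff it has a descendant
at depth exactly `ℓ+1`. -/
def Surv (T : V → V) (dep : V → ℕ) (ℓ : ℕ) (v : V) : Prop :=
  ∃ x, dep x = ℓ + 1 ∧ ∃ k, T^[k] x = v

section Peeling

variable {α : Type*} [DecidableEq α]

theorem one_lt_gdeg {E : Finset (Finset α)} {v : α} {e₁ e₂ : Finset α}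
    (h₁ : e₁ ∈ E) (h₂ : e₂ ∈ E) (hv₁ : v ∈ e₁) (hv₂ : v ∈ e₂) (hne : e₁ ≠ e₂) :
    1 < gdeg E v :=
  Finset.one_lt_card.mpr
    ⟨e₁, Finset.mem_filter.mpr ⟨h₁, hv₁⟩, e₂, Finset.mem_filter.mpr ⟨h₂, hv₂⟩, hne⟩

theorem mem_gpeel_of_forall_exists_ne [Fintype α] {E : Finset (Finset α)} {e : Finset α} (he : e ∈ E)
    (h : ∀ v ∈ e, ∃ e' ∈ E, v ∈ e' ∧ e' ≠ e) : e ∈ gpeel E := by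
  refine Finset.mem_filter.mpr ⟨he, fun v hv => ?_⟩
  obtain ⟨e', he', hve', hne⟩ := h v hv
  exact (one_lt_gdeg he he' hv hve' hne.symm).ne'

end Peeling

namespace Surv

variable {α : Type*} {T : α → α} {dep : α → ℕ} {ℓ : ℕ}

theorem parent {v : α} (hv : Surv T dep ℓ v) : Surv T dep ℓ (T v) := by
  obtain ⟨x, hx, k, rfl⟩ := hv
  exact ⟨x, hx, k + 1, Function.iterate_succ_apply' T k x⟩

theorem exists_child {v : α} (hv : Surv T dep ℓ v) (hdv : dep v ≤ ℓ) :
    ∃ y, T y = v ∧ Surv T dep ℓ y := by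
  obtain ⟨x, hx, k, rfl⟩ := hv
  cases k with
  | zero => simp only [Function.iterate_zero, id] at hdv; omega
  | succ m => exact ⟨T^[m] x, (Function.iterate_succ_apply' T m x).symm, x, hx, m, rfl⟩

end Surv

theorem edge_injOn {α : Type*} [DecidableEq α] {T : α → α} {w : α} {dep : α → ℕ}
    (hdep : ∀ v, v ≠ w → dep (T v) + 1 = dep v) :
    Set.InjOn (fun x => ({x, T x} : Finset α)) {x | x ≠ w} := by
  intro x hx y hy (hxy : ({x, T x} : Finset α) = {y, T y})
  have hdx := hdep x hx
  have hdy := hdep y hy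
  have hxmem : x ∈ ({y, T y} : Finset α) := by rw [← hxy]; exact Finset.mem_insert_self x _
  have hymem : y ∈ ({x, T x} : Finset α) := by rw [hxy]; exact Finset.mem_insert_self y _
  simp only [Finset.mem_insert, Finset.mem_singleton] at hxmem hymem
  rcases hxmem with h | h
  · exact h
  · rcases hymem with h' | h'
    · exact h'.symm
    · rw [← h] at hdy
      rw [← h'] at hdx
      omega

section RootedTree

variable {T : V → V} {w : V} {dep : V → ℕ}

def treeEdges (T : V → V) (w : V) : Finset (Finset V) :=
  Finset.image (fun v => {v, T v}) (Finset.univ.filter (· ≠ w))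

theorem edge_mem_treeEdges {x : V} (hx : x ≠ w) : ({x, T x} : Finset V) ∈ treeEdges T w :=
  Finset.mem_image.mpr ⟨x, Finset.mem_filter.mpr ⟨Finset.mem_univ x, hx⟩, rfl⟩

variable (hdep : ∀ v, v ≠ w → dep (T v) + 1 = dep v)
include hdep

variable {ℓ : ℕ} (hroot : T w = w) (hdepw : dep w = 0)
  (hS : 1 < {v : V | v ≠ w ∧ T v = w ∧ Surv T dep ℓ v}.ncard)
include hroot hdepw hS

theorem edge_mem_gpeel_iterate (i : ℕ) :
    ∀ x, x ≠ w → Surv T dep ℓ x → dep x + i ≤ ℓ + 1 →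
      ({x, T x} : Finset V) ∈ gpeel^[i] (treeEdges T w) := by
  induction i with
  | zero => exact fun x hx _ _ => edge_mem_treeEdges hx
  | succ i ih =>
    intro x hx hs hd
    have hdx := hdep x hx
    have hex := ih x hx hs (by omega)
    have hne : ∀ y, y ≠ w → y ≠ x → ({y, T y} : Finset V) ≠ {x, T x} :=
      fun y hy hyx h => hyx (edge_injOn hdep hy hx h)
    rw [Function.iterate_succ_apply']
    refine mem_gpeel_of_forall_exists_ne hex fun v hv => ?_
    rcases Finset.mem_insert.mp hv with rfl | hv
    · obtain ⟨y, rfl, hys⟩ := hs.exists_child (by omega)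
      have hy : y ≠ w := fun h => hx (by rw [h, hroot])
      have hdy := hdep y hy
      exact ⟨_, ih y hy hys (by omega), Finset.mem_insert_of_mem (Finset.mem_singleton_self _),
        hne y hy fun h => by rw [← h] at hdy; omega⟩
    · rw [Finset.mem_singleton] at hv
      subst hv
      by_cases hTx : T x = w
      · -- the other surviving child of the root keeps `w` off degree one
        obtain ⟨c, ⟨hcw, hcT, hcs⟩, hcx⟩ := Set.exists_ne_of_one_lt_ncard hS x
        have hdc := hdep c hcw
        rw [hcT] at hdc
        refine ⟨_, ih c hcw hcs (by omega), ?_, hne c hcw hcx⟩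
        rw [hcT, hTx]
        exact Finset.mem_insert_of_mem (Finset.mem_singleton_self _)
      · have hdTx := hdep _ hTx
        exact ⟨_, ih (T x) hTx hs.parent (by omega), Finset.mem_insert_self _ _,
          hne (T x) hTx fun h => by rw [h] at hdx; omega⟩

end RootedTree

theorem coreconstruct_lower_bound_general (T : V → V) (w : V) (dep : V → ℕ) (ℓ : ℕ)
    (hroot : T w = w) (hdepw : dep w = 0)
    (hdep : ∀ v, v ≠ w → dep (T v) + 1 = dep v)
    (j : ℕ)
    (hj : j = Set.ncard {v : V | v ≠ w ∧ T v = w ∧ Surv T dep ℓ v})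
    (hj2 : 2 ≤ j) :
    j ≤ gdeg (gpeel^[ℓ]
        (Finset.image (fun v => {v, T v}) (Finset.univ.filter (· ≠ w)))) w := by
  subst hj
  rw [gdeg, ← Set.ncard_coe_finset]
  refine Set.ncard_le_ncard_of_injOn (fun c => ({c, T c} : Finset V)) ?_
    ((edge_injOn hdep).mono fun c hc => hc.1) (Set.toFinite _)
  rintro c ⟨hcw, hcT, hcs⟩
  have hdc := hdep c hcw
  rw [hcT] at hdc
  refine Finset.mem_filter.mpr ⟨edge_mem_gpeel_iterate hdep hroot hdepw (by omega) ℓ c hcw hcs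
    (by omega), ?_⟩
  rw [hcT]
  exact Finset.mem_insert_of_mem (Finset.mem_singleton_self _)

/-- Lower bound of Lemma 6.2: in a rooted tree of depth at most `ℓ+1` (given by a parent
map `T` and depth function `dep`, rooted at `w`, with edge set `{v, T v}` for `v ≠ w`),
if the number `j` of children of the root surviving `CoreConstruct` satisfies `j ≥ 2`,
then after `ℓ` rounds of the peeling process the root `w` still has degree at least `j`. -/
theorem coreconstruct_lower_bound (T : V → V) (w : V) (dep : V → ℕ) (ℓ : ℕ)
    (hroot : T w = w) (hdepw : dep w = 0)
    (hdep : ∀ v, v ≠ w → dep (T v) + 1 = dep v)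
    (hreach : ∀ v, T^[dep v] v = w)
    (hbound : ∀ v, dep v ≤ ℓ + 1)
    (j : ℕ)
    (hj : j = Set.ncard {v : V | v ≠ w ∧ T v = w ∧ Surv T dep ℓ v})
    (hj2 : 2 ≤ j) :
    j ≤ gdeg (gpeel^[ℓ]
        (Finset.image (fun v => {v, T v}) (Finset.univ.filter (· ≠ w)))) w :=
  coreconstruct_lower_bound_general T w dep ℓ hroot hdepw hdep j hj hj2
end

section
/- Fix integer r ≥ 3 and real ε with 0 < ε small. Let d = (1+ε)/(r−1) and let ρ = ρ(ε) ∈ (0,1) be the unique positive solution of 1 − ρ = exp(−d(1 − (1−ρ)^{r−1})). Then as ε → 0⁺, ρ = 2ε/(r−1) + O(ε²), and consequently ρ̂ := 1 − (1−ρ)^{r−1} = 2ε + O(ε²). -/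
/-!
With `n = r - 1`, taking logarithms turns the equation into
`n · (-log (1 - ρ)) = (1 + ε) (1 - (1 - ρ)ⁿ)`. The crude bounds `-log (1 - ρ) ≥ ρ + ρ²/2` and
`1 - (1 - ρ)ⁿ ≤ nρ` already force `ρ ≤ 2ε`. Expanding both sides to second order, the linear
terms cancel and the quadratic ones leave `nρ/2 - ε = O(n²ε²)`, with third-order remainders
controlled by `ρ ≤ 2ε`.
-/

open Real Finset

namespace Real

lemma add_sq_div_two_le_neg_log_one_sub {x : ℝ} (hx₀ : 0 ≤ x) (hx₁ : x < 1) :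
    x + x ^ 2 / 2 ≤ -log (1 - x) := by
  have hsum := hasSum_pow_div_log_of_abs_lt_one (x := x) (by rwa [abs_of_nonneg hx₀])
  have h := sum_le_hasSum (range 2) (fun i _ ↦ by positivity) hsum
  norm_num [sum_range_succ] at h
  linarith

lemma neg_log_one_sub_le {x : ℝ} (hx₀ : 0 ≤ x) (hx₁ : x ≤ 1 / 2) :
    -log (1 - x) ≤ x + x ^ 2 / 2 + 2 * x ^ 3 := by
  have h := abs_log_sub_add_sum_range_le (x := x) (by rw [abs_of_nonneg hx₀]; linarith) 2
  rw [abs_of_nonneg hx₀] at h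
  norm_num [sum_range_succ] at h
  have h3 : x ^ 3 / (1 - x) ≤ 2 * x ^ 3 := by
    rw [div_le_iff₀ (by linarith)]; nlinarith [pow_nonneg hx₀ 3]
  linarith [(abs_le.mp h).1]

end Real

lemma one_sub_pow_le {x : ℝ} (hx₀ : 0 ≤ x) (hx₁ : x ≤ 1) (n : ℕ) :
    (1 - x) ^ n ≤ 1 - n * x + n * (n - 1) / 2 * x ^ 2 := by
  induction n with
  | zero => simp
  | succ k ih =>
    have h := mul_le_mul_of_nonneg_left ih (sub_nonneg.2 hx₁)
    have hk : 0 ≤ (k : ℝ) * (k - 1) * x ^ 3 := by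
      rcases k.eq_zero_or_pos with rfl | hk
      · simp
      · have : (1 : ℝ) ≤ k := by exact_mod_cast hk
        exact mul_nonneg (mul_nonneg (by positivity) (by linarith)) (by positivity)
    rw [pow_succ' (1 - x)]; push_cast
    linarith

lemma one_sub_mul_le_one_sub_pow {x : ℝ} (hx : x ≤ 2) (n : ℕ) : 1 - n * x ≤ (1 - x) ^ n := by
  simpa [sub_eq_add_neg] using one_add_mul_le_pow (a := -x) (by linarith) n

lemma le_one_sub_pow {x : ℝ} (hx₀ : 0 ≤ x) (hx₁ : x ≤ 1) (n : ℕ) :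
    1 - n * x + n * (n - 1) / 2 * x ^ 2 - n ^ 3 / 6 * x ^ 3 ≤ (1 - x) ^ n := by
  induction n with
  | zero => simp
  | succ k ih =>
    have h := mul_le_mul_of_nonneg_left ih (sub_nonneg.2 hx₁)
    have hk : 0 ≤ (6 * k + 1 : ℝ) * x ^ 3 + k ^ 3 * x ^ 4 := by positivity
    rw [pow_succ' (1 - x)]; push_cast
    linarith

section FixedPoint

variable {n : ℕ} {ε ρ : ℝ}

lemma le_two_mul_of_fixedPoint (hn : 0 < n) (hρ₀ : 0 < ρ) (hρ₁ : ρ < 1)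
    (h : n * -log (1 - ρ) = (1 + ε) * (1 - (1 - ρ) ^ n)) : ρ ≤ 2 * ε := by
  have hN : (0 : ℝ) < n := by exact_mod_cast hn
  have hL := add_sq_div_two_le_neg_log_one_sub hρ₀.le hρ₁
  have hB₀ : 0 ≤ 1 - (1 - ρ) ^ n := sub_nonneg.2 (pow_le_one₀ (by linarith) (by linarith))
  have hB₁ := one_sub_mul_le_one_sub_pow (x := ρ) (by linarith) n
  have h1ε : 0 < 1 + ε := by
    by_contra! h1ε
    nlinarith [mul_le_mul_of_nonneg_left hL hN.le, mul_nonpos_of_nonpos_of_nonneg h1ε hB₀]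
  nlinarith [mul_le_mul_of_nonneg_left hL hN.le, mul_le_mul_of_nonneg_left hB₁ h1ε.le,
    mul_pos hN hρ₀]

lemma abs_mul_div_two_sub_le_of_fixedPoint (hn : 1 ≤ n) (hε : ε ≤ 1 / 4) (hρ₀ : 0 < ρ)
    (hρ₁ : ρ < 1) (h : n * -log (1 - ρ) = (1 + ε) * (1 - (1 - ρ) ^ n)) :
    |n * ρ / 2 - ε| ≤ 9 * n ^ 2 * ε ^ 2 := by
  have hρε := le_two_mul_of_fixedPoint hn hρ₀ hρ₁ h
  have hN : (1 : ℝ) ≤ n := Nat.one_le_cast.2 hn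
  have hL₁ := add_sq_div_two_le_neg_log_one_sub hρ₀.le hρ₁
  have hL₂ := neg_log_one_sub_le hρ₀.le (by linarith)
  have hB₁ := one_sub_pow_le hρ₀.le hρ₁.le n
  have hB₂ := le_one_sub_pow hρ₀.le hρ₁.le n
  -- subtracting the second-order expansions of both sides, the linear terms cancel
  have hD : n * ρ * (n * ρ / 2 - ε + ε * (n - 1) * ρ / 2) =
      (1 + ε) * (1 - n * ρ + n * (n - 1) / 2 * ρ ^ 2 - (1 - ρ) ^ n)
        - n * (-log (1 - ρ) - ρ - ρ ^ 2 / 2) := by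
    linear_combination h
  have hNρ : 0 < n * ρ := by positivity
  have hε₀ : 0 ≤ ε := by linarith
  have hρ_sq : ρ ^ 2 ≤ 4 * ε ^ 2 := by nlinarith
  have hupper :
      n * ρ * (n * ρ / 2 - ε + ε * (n - 1) * ρ / 2) ≤ n * ρ * (n ^ 2 * ρ ^ 2 / 4) := by
    have := mul_le_mul (show 1 + ε ≤ 5 / 4 by linarith)
      (show 1 - n * ρ + n * (n - 1) / 2 * ρ ^ 2 - (1 - ρ) ^ n ≤ n ^ 3 / 6 * ρ ^ 3 by linarith)
      (by linarith) (by norm_num)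
    linarith [mul_nonneg (by linarith : (0 : ℝ) ≤ n)
      (by linarith : 0 ≤ -log (1 - ρ) - ρ - ρ ^ 2 / 2), pow_pos hNρ 3]
  have hlower : n * ρ * (-2 * ρ ^ 2) ≤ n * ρ * (n * ρ / 2 - ε + ε * (n - 1) * ρ / 2) := by
    linarith [mul_nonneg (by linarith : 0 ≤ 1 + ε)
        (by linarith : 0 ≤ 1 - n * ρ + n * (n - 1) / 2 * ρ ^ 2 - (1 - ρ) ^ n),
      mul_le_mul_of_nonneg_left (by linarith : -log (1 - ρ) - ρ - ρ ^ 2 / 2 ≤ 2 * ρ ^ 3)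
        (by linarith : (0 : ℝ) ≤ n)]
  have hD₁ := le_of_mul_le_mul_left hlower hNρ
  have hD₂ := le_of_mul_le_mul_left hupper hNρ
  have hcorr : ε * (n - 1) * ρ / 2 ≤ (n - 1) * ε ^ 2 := by
    nlinarith [mul_le_mul_of_nonneg_left hρε (mul_nonneg hε₀ (by linarith : (0 : ℝ) ≤ n - 1))]
  have hcorr₀ : 0 ≤ ε * (n - 1) * ρ / 2 := by
    have : (0 : ℝ) ≤ n - 1 := by linarith
    positivity
  have hN_sq : (n : ℝ) ≤ n ^ 2 := by nlinarith
  have hN_sq' : (1 : ℝ) ≤ n ^ 2 := by nlinarith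
  rw [abs_le]
  constructor
  · have h1 := mul_le_mul_of_nonneg_right hN_sq (sq_nonneg ε)
    have h2 := mul_le_mul_of_nonneg_right hN_sq' (sq_nonneg ε)
    linarith [sq_nonneg (n * ε)]
  · linarith [mul_le_mul_of_nonneg_left hρ_sq (sq_nonneg (n : ℝ)), sq_nonneg (n * ε)]

lemma abs_sub_two_mul_div_le_of_fixedPoint (hn : 1 ≤ n) (hε : ε ≤ 1 / 4) (hρ₀ : 0 < ρ)
    (hρ₁ : ρ < 1) (h : n * -log (1 - ρ) = (1 + ε) * (1 - (1 - ρ) ^ n)) :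
    |ρ - 2 * ε / n| ≤ 18 * n * ε ^ 2 := by
  have hN : (0 : ℝ) < n := by exact_mod_cast hn
  calc |ρ - 2 * ε / n| = 2 / n * |n * ρ / 2 - ε| := by
        rw [← abs_of_pos (by positivity : (0 : ℝ) < 2 / n), ← abs_mul]
        congr 1
        field_simp
    _ ≤ 2 / n * (9 * n ^ 2 * ε ^ 2) := by
        gcongr
        exact abs_mul_div_two_sub_le_of_fixedPoint hn hε hρ₀ hρ₁ h
    _ = 18 * n * ε ^ 2 := by
        field_simp
        ring

lemma abs_one_sub_one_sub_pow_sub_two_mul_le_of_fixedPoint (hn : 1 ≤ n) (hε : ε ≤ 1 / 4)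
    (hρ₀ : 0 < ρ) (hρ₁ : ρ < 1) (h : n * -log (1 - ρ) = (1 + ε) * (1 - (1 - ρ) ^ n)) :
    |1 - (1 - ρ) ^ n - 2 * ε| ≤ 20 * n ^ 2 * ε ^ 2 := by
  have hρε := le_two_mul_of_fixedPoint hn hρ₀ hρ₁ h
  have hmain := abs_le.mp (abs_mul_div_two_sub_le_of_fixedPoint hn hε hρ₀ hρ₁ h)
  have hB₁ := one_sub_mul_le_one_sub_pow (x := ρ) (by linarith) n
  have hB₂ := one_sub_pow_le hρ₀.le hρ₁.le n
  have hρ_sq : n ^ 2 * ρ ^ 2 ≤ n ^ 2 * (4 * ε ^ 2) :=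
    mul_le_mul_of_nonneg_left (by nlinarith) (sq_nonneg _)
  rw [abs_le]
  constructor <;> linarith [mul_nonneg (Nat.cast_nonneg (α := ℝ) n) (sq_nonneg ρ)]

end FixedPoint

/-- Asymptotics of the positive fixed point near criticality: with `d = (1+ε)/(r-1)`,
any positive solution `ρ ∈ (0,1)` of `1 - ρ = exp(-d(1-(1-ρ)^(r-1)))` satisfies
`ρ = 2ε/(r-1) + O(ε²)` and `ρ̂ = 1-(1-ρ)^(r-1) = 2ε + O(ε²)` as `ε → 0⁺`. -/
theorem rho_asymptotics (r : ℕ) (hr : 3 ≤ r) :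
    ∃ C ε₀ : ℝ, 0 < C ∧ 0 < ε₀ ∧ ∀ ε : ℝ, 0 < ε → ε < ε₀ →
      ∀ ρ : ℝ, 0 < ρ → ρ < 1 →
        1 - ρ = Real.exp (-(((1 + ε) / ((r : ℝ) - 1)) * (1 - (1 - ρ) ^ (r - 1)))) →
        |ρ - 2 * ε / ((r : ℝ) - 1)| ≤ C * ε ^ 2 ∧
        |(1 - (1 - ρ) ^ (r - 1)) - 2 * ε| ≤ C * ε ^ 2 := by
  obtain ⟨n, rfl⟩ : ∃ n, r = n + 1 := ⟨r - 1, by omega⟩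
  have hn : 1 ≤ n := by omega
  have hN : (1 : ℝ) ≤ n := Nat.one_le_cast.2 hn
  simp only [Nat.cast_add, Nat.cast_one, add_sub_cancel_right, Nat.add_sub_cancel]
  refine ⟨20 * n ^ 2, 1 / 4, by positivity, by norm_num, fun ε _ hε ρ hρ₀ hρ₁ heq ↦ ?_⟩
  have h : n * -log (1 - ρ) = (1 + ε) * (1 - (1 - ρ) ^ n) := by
    rw [congrArg log heq, log_exp]
    field_simp
  refine ⟨?_, abs_one_sub_one_sub_pow_sub_two_mul_le_of_fixedPoint hn hε.le hρ₀ hρ₁ h⟩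
  calc |ρ - 2 * ε / n| ≤ 18 * n * ε ^ 2 :=
        abs_sub_two_mul_div_le_of_fixedPoint hn hε.le hρ₀ hρ₁ h
    _ ≤ 20 * n ^ 2 * ε ^ 2 := by gcongr <;> nlinarith
end
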